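/- arXiv:1510.02438 — 10 statements merged into one kernel-verified Lean document; each statement's English description precedes it below -/
import Mathlib

section
/- Let H1 = (V1, E1) and H2 = (V2, E2) be vertex-disjoint 1-Sperner hypergraphs and let z ∉ V1 ∪ V2. If it is not the case that both E1 = {V1} and E2 = {∅}, then the gluing H1 ⊙ H2 is a 1-Sperner hypergraph. Moreover, if E1 = {V1} and E2 = {∅}, then H1 ⊙ H2 is not Sperner (some hyperedge contains another distinct hyperedge). -/
/-!
Gluing preserves set differences inside each part: `{z} ∪ e` versus `{z} ∪ f`, and `V₁ ∪ e`
versus `V₁ ∪ f`, differ exactly as `e` and `f` do. Across the parts,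
`({z} ∪ e) \ (V₁ ∪ f) = {z}`, so the minimum is `1` as long as `(V₁ ∪ f) \ ({z} ∪ e)` is
nonempty, which fails only for `e = V₁` and `f = ∅`. A 1-Sperner family containing its ground
set `V₁`, or containing `∅`, has no other member, so that happens only when `E₁ = {V₁}` and
`E₂ = {∅}`; then `V₁ ⊆ {z} ∪ V₁` are two distinct glued hyperedges.
-/

open Finset

/-- A hypergraph with hyperedge set `E` is 1-Sperner if every two distinct
hyperedges `e, f` satisfy `min |e \ f| |f \ e| = 1`. -/
def OneSperner {α : Type*} [DecidableEq α] (E : Finset (Finset α)) : Prop :=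
  ∀ e ∈ E, ∀ f ∈ E, e ≠ f → min (e \ f).card (f \ e).card = 1

/-- The hyperedge set of the gluing of `(V1, E1)` and `(V2, E2)` with new vertex `z`. -/
def glueEdges {α : Type*} [DecidableEq α] (z : α) (V1 : Finset α)
    (E1 E2 : Finset (Finset α)) : Finset (Finset α) :=
  E1.image (fun e => insert z e) ∪ E2.image (fun e => V1 ∪ e)

namespace OneSperner

variable {α : Type*} [DecidableEq α] {E : Finset (Finset α)}

theorem eq_of_subset (h : OneSperner E) {e f : Finset α} (he : e ∈ E) (hf : f ∈ E)
    (hef : e ⊆ f) : e = f := by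
  by_contra hne
  have := h e he f hf hne
  rw [sdiff_eq_empty_iff_subset.mpr hef] at this
  simp at this

theorem eq_singleton_of_mem_of_forall_subset (h : OneSperner E) {V : Finset α} (hV : V ∈ E)
    (hE : ∀ e ∈ E, e ⊆ V) : E = {V} :=
  eq_singleton_iff_unique_mem.mpr ⟨hV, fun e he => h.eq_of_subset he hV (hE e he)⟩

theorem eq_singleton_empty (h : OneSperner E) (h0 : ∅ ∈ E) : E = {∅} :=
  eq_singleton_iff_unique_mem.mpr ⟨h0, fun e he => (h.eq_of_subset h0 he (empty_subset e)).symm⟩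

theorem image {β : Type*} [DecidableEq β] {g : Finset α → Finset β} (h : OneSperner E)
    (hg : ∀ a ∈ E, ∀ b ∈ E, #(g a \ g b) = #(a \ b)) : OneSperner (E.image g) := by
  simp only [OneSperner, mem_image]
  rintro _ ⟨a, ha, rfl⟩ _ ⟨b, hb, rfl⟩ hab
  rw [hg a ha b hb, hg b hb a ha]
  exact h a ha b hb (fun h => hab (congrArg g h))

theorem union {A B : Finset (Finset α)} (hA : OneSperner A) (hB : OneSperner B)
    (hAB : ∀ a ∈ A, ∀ b ∈ B, min #(a \ b) #(b \ a) = 1) : OneSperner (A ∪ B) := by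
  intro e he f hf hef
  rcases mem_union.mp he with he | he <;> rcases mem_union.mp hf with hf | hf
  · exact hA e he f hf hef
  · exact hAB e he f hf
  · rw [min_comm]
    exact hAB f hf e he
  · exact hB e he f hf hef

end OneSperner

section Gluing

variable {α : Type*} [DecidableEq α] {V a b : Finset α} {z : α}

theorem insert_sdiff_insert_of_notMem (hz : z ∉ a) (b : Finset α) :
    insert z a \ insert z b = a \ b := by
  rw [insert_sdiff_insert, sdiff_insert_of_notMem hz]

theorem union_sdiff_union_of_disjoint (h : Disjoint V a) (b : Finset α) :
    (V ∪ a) \ (V ∪ b) = a \ b := by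
  ext x
  have : x ∈ V → x ∉ a := fun hx => disjoint_left.mp h hx
  simp only [mem_sdiff, mem_union]
  tauto

theorem insert_sdiff_union_eq_singleton (ha : a ⊆ V) (hz : z ∉ V ∪ b) :
    insert z a \ (V ∪ b) = {z} := by
  ext x
  have := @ha x
  simp only [mem_sdiff, mem_insert, mem_union, mem_singleton] at hz ⊢
  constructor
  · tauto
  · rintro rfl
    tauto

theorem union_sdiff_insert_nonempty (ha : a ⊆ V) (hb : Disjoint V b) (hz : z ∉ V ∪ b)
    (hab : ¬(a = V ∧ b = ∅)) : ((V ∪ b) \ insert z a).Nonempty := by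
  rw [nonempty_iff_ne_empty, Ne, sdiff_eq_empty_iff_subset, union_subset_iff]
  rintro ⟨hV, hb'⟩
  have hVa : V ⊆ a := fun x hx => (mem_insert.mp (hV hx)).resolve_left
    (fun h => hz (mem_union_left _ (h ▸ hx)))
  refine hab ⟨subset_antisymm ha hVa, eq_empty_of_forall_notMem fun x hx => ?_⟩
  rcases mem_insert.mp (hb' hx) with rfl | hxa
  · exact hz (mem_union_right _ hx)
  · exact disjoint_left.mp hb (ha hxa) hx

theorem min_card_insert_sdiff_union (ha : a ⊆ V) (hb : Disjoint V b) (hz : z ∉ V ∪ b)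
    (hab : ¬(a = V ∧ b = ∅)) :
    min #(insert z a \ (V ∪ b)) #((V ∪ b) \ insert z a) = 1 := by
  rw [insert_sdiff_union_eq_singleton ha hz, card_singleton]
  have := (union_sdiff_insert_nonempty ha hb hz hab).card_pos
  omega

end Gluing

theorem stmt_0 {α : Type*} [DecidableEq α] (V1 V2 : Finset α)
    (E1 E2 : Finset (Finset α)) (z : α)
    (hE1 : ∀ e ∈ E1, e ⊆ V1) (hE2 : ∀ e ∈ E2, e ⊆ V2)
    (hdisj : Disjoint V1 V2) (hz : z ∉ V1 ∪ V2)
    (h1 : OneSperner E1) (h2 : OneSperner E2) :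
    (¬(E1 = {V1} ∧ E2 = ({∅} : Finset (Finset α))) →
        OneSperner (glueEdges z V1 E1 E2)) ∧
    ((E1 = {V1} ∧ E2 = ({∅} : Finset (Finset α))) →
        ∃ e ∈ glueEdges z V1 E1 E2, ∃ f ∈ glueEdges z V1 E1 E2, e ≠ f ∧ e ⊆ f) := by
  have hzV1 : z ∉ V1 := fun h => hz (mem_union_left _ h)
  have hdisj2 : ∀ b ∈ E2, Disjoint V1 b := fun b hb => hdisj.mono_right (hE2 b hb)
  have hz2 : ∀ b ∈ E2, z ∉ V1 ∪ b := fun b hb h =>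
    hz (union_subset_union_right (hE2 b hb) h)
  constructor
  · intro hne
    refine (h1.image fun a ha b _ => ?_).union (h2.image fun a ha b _ => ?_) ?_
    · rw [insert_sdiff_insert_of_notMem (fun h => hzV1 (hE1 a ha h))]
    · rw [union_sdiff_union_of_disjoint (hdisj2 a ha)]
    · simp only [mem_image]
      rintro _ ⟨a, ha, rfl⟩ _ ⟨b, hb, rfl⟩
      refine min_card_insert_sdiff_union (hE1 a ha) (hdisj2 b hb) (hz2 b hb) ?_
      rintro ⟨rfl, rfl⟩
      exact hne ⟨h1.eq_singleton_of_mem_of_forall_subset ha hE1, h2.eq_singleton_empty hb⟩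
  · rintro ⟨rfl, rfl⟩
    refine ⟨V1, by simp [glueEdges], insert z V1, by simp [glueEdges], ?_, subset_insert z V1⟩
    exact fun h => hzV1 (h ▸ mem_insert_self z V1)
end

section
/- Let H1 = (V1, E1) and H2 = (V2, E2) be vertex-disjoint hypergraphs and let z ∉ V1 ∪ V2. Then the complement of the gluing H1 ⊙ H2 (with gluing vertex z) equals the gluing of the complement of H2 with the complement of H1 (again with gluing vertex z); that is, the complement of H1 ⊙ H2 has hyperedge set {{z} ∪ (V2 \ e) : e ∈ E2} ∪ {V2 ∪ (V1 \ e) : e ∈ E1}, where the complement of the gluing is taken with respect to the vertex set V1 ∪ V2 ∪ {z}. -/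
open Finset

namespace Finset

variable {α : Type*} [DecidableEq α]

theorem insert_union_sdiff_insert_of_disjoint {V1 V2 e : Finset α} {z : α}
    (he : Disjoint V2 e) (hz : z ∉ V1 ∪ V2) :
    insert z (V1 ∪ V2) \ insert z e = V2 ∪ (V1 \ e) := by
  rw [insert_sdiff_insert, sdiff_insert_of_notMem hz, union_sdiff_distrib,
    sdiff_eq_self_of_disjoint he, union_comm]

theorem insert_union_sdiff_union_left {V1 V2 e : Finset α} {z : α}
    (hdisj : Disjoint V1 V2) (hz : z ∉ V1 ∪ e) :
    insert z (V1 ∪ V2) \ (V1 ∪ e) = insert z (V2 \ e) := by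
  rw [insert_sdiff_of_notMem _ hz, sdiff_union_distrib, ← sdiff_sdiff_left', union_sdiff_left,
    sdiff_eq_self_of_disjoint hdisj.symm]

end Finset

theorem stmt_2 {α : Type*} [DecidableEq α] (V1 V2 : Finset α)
    (E1 E2 : Finset (Finset α)) (z : α)
    (hE1 : ∀ e ∈ E1, e ⊆ V1) (hE2 : ∀ e ∈ E2, e ⊆ V2)
    (hdisj : Disjoint V1 V2) (hz : z ∉ V1 ∪ V2) :
    (glueEdges z V1 E1 E2).image (fun e => (insert z (V1 ∪ V2)) \ e) =
      glueEdges z V2 (E2.image (fun e => V2 \ e)) (E1.image (fun e => V1 \ e)) := by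
  simp only [glueEdges, image_union, image_image, Function.comp_def]
  rw [union_comm]
  congr 1
  · exact image_congr fun e he =>
      insert_union_sdiff_union_left hdisj fun h => hz (union_subset_union_right (hE2 e he) h)
  · exact image_congr fun e he =>
      insert_union_sdiff_insert_of_disjoint (hdisj.symm.mono_right (hE1 e he)) hz
end

section
/- Let H = (V, E) be a hypergraph and let z ∈ V. If H is z-decomposable, then the complement of H is also z-decomposable. -/
open Finset

/-- A hypergraph `(V, E)` is `z`-decomposable if `V` can be partitioned as
`{z} ∪ V1 ∪ V2` so that `(V, E)` is the gluing of hypergraphs `(V1, E1)` and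
`(V2, E2)` with gluing vertex `z`. -/
def ZDecomposable {α : Type*} [DecidableEq α] (V : Finset α) (E : Finset (Finset α))
    (z : α) : Prop :=
  ∃ V1 V2 : Finset α, ∃ E1 E2 : Finset (Finset α),
    Disjoint V1 V2 ∧ z ∉ V1 ∪ V2 ∧ V = insert z (V1 ∪ V2) ∧
    (∀ e ∈ E1, e ⊆ V1) ∧ (∀ e ∈ E2, e ⊆ V2) ∧ E = glueEdges z V1 E1 E2

section Complement

variable {α : Type*} [DecidableEq α] {z : α} {V1 V2 e : Finset α}

theorem Finset.insert_union_sdiff_insert (hz : z ∉ V1 ∪ V2) (he : Disjoint V2 e) :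
    insert z (V1 ∪ V2) \ insert z e = V2 ∪ (V1 \ e) := by
  rw [insert_sdiff_insert, sdiff_insert_of_notMem hz, union_sdiff_distrib, he.sdiff_eq_left,
    union_comm]

theorem Finset.insert_union_sdiff_union (hz : z ∉ V1 ∪ e) (hV : Disjoint V1 V2) :
    insert z (V1 ∪ V2) \ (V1 ∪ e) = insert z (V2 \ e) := by
  grind [disjoint_left]

/-- Complementing the gluing `H1 ⊙ H2` inside its vertex set gives `H2ᶜ ⊙ H1ᶜ`. -/
theorem glueEdges_image_sdiff {E1 E2 : Finset (Finset α)} (hV : Disjoint V1 V2)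
    (hz : z ∉ V1 ∪ V2) (hE1 : ∀ e ∈ E1, e ⊆ V1) (hE2 : ∀ e ∈ E2, e ⊆ V2) :
    (glueEdges z V1 E1 E2).image (insert z (V1 ∪ V2) \ ·) =
      glueEdges z V2 (E2.image (V2 \ ·)) (E1.image (V1 \ ·)) := by
  rw [glueEdges, glueEdges, image_union, image_image, image_image, image_image, image_image,
    union_comm]
  congr 1 <;> refine image_congr fun e he => ?_
  · have hze : z ∉ V1 ∪ e := by
      simp only [mem_union, not_or] at hz ⊢
      exact ⟨hz.1, fun h => hz.2 (hE2 e he h)⟩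
    exact insert_union_sdiff_union hze hV
  · exact insert_union_sdiff_insert hz (hV.symm.mono_right (hE1 e he))

end Complement

theorem stmt_3_general {α : Type*} [DecidableEq α] (V : Finset α) (E : Finset (Finset α))
    (z : α) (h : ZDecomposable V E z) :
    ZDecomposable V (E.image (fun e => V \ e)) z := by
  obtain ⟨V1, V2, E1, E2, hV, hz, rfl, hE1, hE2, rfl⟩ := h
  refine ⟨V2, V1, E2.image (V2 \ ·), E1.image (V1 \ ·), hV.symm, by rwa [union_comm],
    by rw [union_comm], forall_mem_image.2 fun _ _ => sdiff_subset,
    forall_mem_image.2 fun _ _ => sdiff_subset, glueEdges_image_sdiff hV hz hE1 hE2⟩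

theorem stmt_3 {α : Type*} [DecidableEq α] (V : Finset α) (E : Finset (Finset α))
    (z : α) (hz : z ∈ V) (h : ZDecomposable V E z) :
    ZDecomposable V (E.image (fun e => V \ e)) z :=
  stmt_3_general V E z h
end

section
/- Let H = (V, E) be a 1-Sperner hypergraph and let C ∈ E be a hyperedge of maximum size (|C| ≥ |e| for all e ∈ E). Let x and y be two distinct vertices not in C, and let A, B ∈ E be hyperedges with x ∈ A and y ∈ B. If |A| ≤ |B|, then A ∩ C ⊆ B ∩ C. -/
/-!
In a 1-Sperner hypergraph the smaller of two distinct hyperedges has exactly one vertex outside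
the larger. Applied to `B` and the maximum hyperedge `C`, this vertex is `y`, so `x ∉ B`; applied
to `A` and `B`, it is `x`. Hence every vertex of `A ∩ C` lies in `B`, because `x ∉ C`.
-/

open Finset

namespace OneSperner

variable {α : Type*} [DecidableEq α] {E : Finset (Finset α)} {s t : Finset α}

theorem card_sdiff_eq_one (hE : OneSperner E) (hs : s ∈ E) (ht : t ∈ E) (hst : s ≠ t)
    (hle : s.card ≤ t.card) : (s \ t).card = 1 := by
  rw [← hE s hs t ht hst, min_eq_left (card_sdiff_le_card_sdiff_iff.2 hle)]

theorem eq_of_mem_sdiff (hE : OneSperner E) (hs : s ∈ E) (ht : t ∈ E)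
    (hle : s.card ≤ t.card) {a b : α} (ha : a ∈ s \ t) (hb : b ∈ s \ t) : a = b := by
  have hst : s ≠ t := by
    rintro rfl
    simp at ha
  exact card_le_one.1 (hE.card_sdiff_eq_one hs ht hst hle).le a ha b hb

end OneSperner

theorem stmt_5_general {α : Type*} [DecidableEq α] (E : Finset (Finset α))
    (h : OneSperner E)
    (C : Finset α) (hC : C ∈ E) (hCmax : ∀ e ∈ E, e.card ≤ C.card)
    (x y : α) (hxy : x ≠ y) (hx : x ∉ C) (hy : y ∉ C)
    (A B : Finset α) (hA : A ∈ E) (hB : B ∈ E) (hxA : x ∈ A) (hyB : y ∈ B)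
    (hAB : A.card ≤ B.card) :
    A ∩ C ⊆ B ∩ C := by
  have hxB : x ∉ B := fun hxB ↦
    hxy (h.eq_of_mem_sdiff hB hC (hCmax B hB) (mem_sdiff.2 ⟨hxB, hx⟩) (mem_sdiff.2 ⟨hyB, hy⟩))
  intro a ha
  obtain ⟨haA, haC⟩ := mem_inter.1 ha
  refine mem_inter.2 ⟨?_, haC⟩
  by_contra haB
  have hxa : x = a :=
    h.eq_of_mem_sdiff hA hB hAB (mem_sdiff.2 ⟨hxA, hxB⟩) (mem_sdiff.2 ⟨haA, haB⟩)
  exact hx (hxa ▸ haC)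

theorem stmt_5 {α : Type*} [DecidableEq α] (V : Finset α) (E : Finset (Finset α))
    (hE : ∀ e ∈ E, e ⊆ V) (h : OneSperner E)
    (C : Finset α) (hC : C ∈ E) (hCmax : ∀ e ∈ E, e.card ≤ C.card)
    (x y : α) (hxy : x ≠ y) (hx : x ∉ C) (hy : y ∉ C)
    (A B : Finset α) (hA : A ∈ E) (hB : B ∈ E) (hxA : x ∈ A) (hyB : y ∈ B)
    (hAB : A.card ≤ B.card) :
    A ∩ C ⊆ B ∩ C :=
  stmt_5_general E h C hC hCmax x y hxy hx hy A B hA hB hxA hyB hAB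
end

section
/- Every 1-Sperner hypergraph is threshold: if H = (V, E) is a hypergraph such that every two distinct hyperedges e, f ∈ E satisfy min(|e \ f|, |f \ e|) = 1, then there exist a weight function w : V → ℕ and a threshold t ∈ ℕ such that for every subset X ⊆ V, ∑_{v ∈ X} w(v) ≥ t if and only if e ⊆ X for some e ∈ E. -/
/-!
Let `e₀` be an edge of minimum and `m ≠ e₀` one of maximum size, and let `z` be the unique vertex
of `e₀ \ m`. Then every edge avoiding `z` contains `e \ {z}` for every edge `e` through `z`. Hence
`E = {insert z a : a ∈ E₁} ∪ {V₁ ∪ b : b ∈ E₂}` is glued at `z` from the link `E₁` of `z`, whose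
vertices form `V₁`, and the edges `E₂` avoiding `z` with `V₁` removed, which live on
`V₂ = V \ {z}`; both are 1-Sperner on fewer vertices. Gluing preserves thresholdness: weigh `V₁`
by `A w₁ + B` and `V₂` by `w₂`, where `B` exceeds the total `w₂`-weight and `A` exceeds `B |V₁|`
plus that total, so that weights compare lexicographically.
-/

open Finset

section

variable {α : Type*}

def IsThresholdOn (V : Finset α) (E : Finset (Finset α)) : Prop :=
  ∃ w : α → ℕ, ∃ t : ℕ, ∀ X ⊆ V, (t ≤ ∑ v ∈ X, w v ↔ ∃ e ∈ E, e ⊆ X)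

theorem isThresholdOn_empty (V : Finset α) : IsThresholdOn V ∅ :=
  ⟨0, 1, by simp⟩

variable [DecidableEq α]

theorem card_le_card_inter_iff {s t : Finset α} : #t ≤ #(s ∩ t) ↔ t ⊆ s := by
  rw [← inter_eq_right]
  exact ⟨eq_of_subset_of_card_le inter_subset_right, fun h => (congrArg card h).ge⟩

theorem isThresholdOn_singleton (V e : Finset α) : IsThresholdOn V {e} := by
  refine ⟨fun v => if v ∈ e then 1 else 0, #e, fun X _ => ?_⟩
  simp only [sum_boole, Nat.cast_id, filter_mem_eq_inter, card_le_card_inter_iff, mem_singleton,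
    exists_eq_left]

namespace OneSperner

variable {E F : Finset (Finset α)} {e f : Finset α}

theorem card_sdiff_eq_one_s8 (h : OneSperner E) (he : e ∈ E) (hf : f ∈ E) (hne : e ≠ f)
    (hcard : #e ≤ #f) : #(e \ f) = 1 := by
  rw [← h e he f hf hne, min_eq_left (card_sdiff_le_card_sdiff_iff.2 hcard)]

theorem sdiff_singleton_subset (h : OneSperner E) (he : e ∈ E) (hf : f ∈ E) (hcard : #e ≤ #f)
    {x : α} (hxe : x ∈ e) (hxf : x ∉ f) : e \ {x} ⊆ f := by
  obtain ⟨y, hy⟩ := card_eq_one.1 (h.card_sdiff_eq_one_s8 he hf (by rintro rfl; exact hxf hxe) hcard)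
  obtain rfl : x = y := mem_singleton.1 (hy ▸ mem_sdiff.2 ⟨hxe, hxf⟩)
  exact sdiff_le_comm.1 hy.le

theorem mono (h : OneSperner E) (hF : F ⊆ E) : OneSperner F :=
  fun e he f hf => h e (hF he) f (hF hf)

theorem image_sdiff (h : OneSperner E) {S : Finset α} (hS : ∀ e ∈ E, S ⊆ e) :
    OneSperner (E.image (· \ S)) := by
  simp only [OneSperner, mem_image]
  rintro _ ⟨e, he, rfl⟩ _ ⟨f, hf, rfl⟩ hne
  rw [sdiff_sdiff_sdiff_cancel_right (hS f hf), sdiff_sdiff_sdiff_cancel_right (hS e he)]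
  exact h e he f hf (by rintro rfl; exact hne rfl)

theorem sdiff_singleton_subset_of_min_max (h : OneSperner E) {e₀ m : Finset α} (he₀ : e₀ ∈ E)
    (hm : m ∈ E) (hmin : ∀ f ∈ E, #e₀ ≤ #f) (hmax : ∀ f ∈ E, #f ≤ #m) {z : α} (hze₀ : z ∈ e₀)
    (hzm : z ∉ m) (he : e ∈ E) (hze : z ∈ e) (hf : f ∈ E) (hzf : z ∉ f) : e \ {z} ⊆ f := by
  by_cases hef : #e ≤ #f
  · exact h.sdiff_singleton_subset he hf hef hze hzf
  exfalso
  push Not at hef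
  -- The unique vertex `y` of `f \ m` lies outside `e`, hence is the unique vertex of `f \ e`;
  -- as `e₀ \ {z} ⊆ f ∩ m` misses `y`, this forces `e₀ ⊆ e`, impossible since `#e₀ < #e`.
  have hem : e \ {z} ⊆ m := h.sdiff_singleton_subset he hm (hmax e he) hze hzm
  have he₀m : e₀ \ {z} ⊆ m := h.sdiff_singleton_subset he₀ hm (hmin m hm) hze₀ hzm
  have he₀f : e₀ \ {z} ⊆ f := h.sdiff_singleton_subset he₀ hf (hmin f hf) hze₀ hzf
  have hfe : #(f \ e) ≤ 1 := (h.card_sdiff_eq_one_s8 hf he (by rintro rfl; exact hzf hze) hef.le).le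
  have hfm : f ≠ m := by rintro rfl; exact (hmax e he).not_gt hef
  obtain ⟨y, hy⟩ := card_eq_one.1 (h.card_sdiff_eq_one_s8 hf hm hfm (hmax f hf))
  obtain ⟨hyf, hym⟩ := mem_sdiff.1 (hy ▸ mem_singleton_self y)
  have hye : y ∉ e := fun hye => by
    obtain rfl : y = z := by
      by_contra hyz
      exact hym (hem (mem_sdiff.2 ⟨hye, notMem_singleton.2 hyz⟩))
    exact hzf hyf
  have he₀e : e₀ ⊆ e := fun x hx => by
    by_cases hxz : x = z
    · exact hxz ▸ hze
    have hx' : x ∈ e₀ \ {z} := mem_sdiff.2 ⟨hx, notMem_singleton.2 hxz⟩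
    by_contra hxe
    obtain rfl : x = y :=
      card_le_one.1 hfe x (mem_sdiff.2 ⟨he₀f hx', hxe⟩) y (mem_sdiff.2 ⟨hyf, hye⟩)
    exact hym (he₀m hx')
  have h₀ := h.card_sdiff_eq_one_s8 he₀ he (by rintro rfl; exact (hmin f hf).not_gt hef) (hmin e he)
  rw [sdiff_eq_empty_iff_subset.2 he₀e, card_empty] at h₀
  exact zero_ne_one h₀

theorem exists_pivot (h : OneSperner E) (hE : 1 < #E) :
    ∃ z, (∃ e ∈ E, z ∈ e) ∧ ∀ e ∈ E, z ∈ e → ∀ f ∈ E, z ∉ f → e \ {z} ⊆ f := by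
  obtain ⟨e₀, he₀, hmin⟩ := E.exists_min_image card (card_pos.1 (by omega))
  obtain ⟨m, hm, hmax⟩ := (E.erase e₀).exists_max_image card
    (card_pos.1 (by rw [card_erase_of_mem he₀]; omega))
  obtain ⟨hme₀, hm⟩ := mem_erase.1 hm
  replace hmax : ∀ f ∈ E, #f ≤ #m := fun f hf => by
    by_cases hfe₀ : f = e₀
    · exact hfe₀ ▸ hmin m hm
    · exact hmax f (mem_erase.2 ⟨hfe₀, hf⟩)
  obtain ⟨z, hz⟩ := card_eq_one.1 (h.card_sdiff_eq_one_s8 he₀ hm (Ne.symm hme₀) (hmin m hm))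
  obtain ⟨hze₀, hzm⟩ := mem_sdiff.1 (hz ▸ mem_singleton_self z)
  exact ⟨z, ⟨e₀, he₀, hze₀⟩, fun e he hze f hf hzf =>
    h.sdiff_singleton_subset_of_min_max he₀ hm hmin hmax hze₀ hzm he hze hf hzf⟩

end OneSperner

def link (E : Finset (Finset α)) (z : α) : Finset (Finset α) :=
  (E.filter (z ∈ ·)).image (· \ {z})

theorem oneSperner_link {E : Finset (Finset α)} (h : OneSperner E) (z : α) :
    OneSperner (link E z) :=
  (h.mono (filter_subset _ E)).image_sdiff fun _ he => singleton_subset_iff.2 (mem_filter.1 he).2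

theorem sup_link_subset {E : Finset (Finset α)} {z : α} {f : Finset α}
    (hf : ∀ e ∈ E, z ∈ e → e \ {z} ⊆ f) : (link E z).sup id ⊆ f :=
  Finset.sup_le_iff (f := id).2 fun a ha => by
    obtain ⟨e, he, rfl⟩ := mem_image.1 ha
    exact hf e (mem_filter.1 he).1 (mem_filter.1 he).2

def glue (z : α) (V₁ : Finset α) (E₁ E₂ : Finset (Finset α)) : Finset (Finset α) :=
  E₁.image (insert z) ∪ E₂.image (V₁ ∪ ·)

theorem eq_glue_link {E : Finset (Finset α)} {z : α} {V₁ : Finset α}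
    (hV₁ : ∀ f ∈ E, z ∉ f → V₁ ⊆ f) :
    E = glue z V₁ (link E z) ((E.filter (z ∉ ·)).image (· \ V₁)) := by
  ext e
  simp only [glue, link, mem_union, mem_image, mem_filter]
  constructor
  · intro he
    by_cases hze : z ∈ e
    · exact .inl ⟨e \ {z}, ⟨e, ⟨he, hze⟩, rfl⟩, insert_sdiff_self_of_mem hze⟩
    · exact .inr ⟨e \ V₁, ⟨e, ⟨he, hze⟩, rfl⟩, union_sdiff_of_subset (hV₁ e he hze)⟩
  · rintro (⟨_, ⟨f, ⟨hf, hzf⟩, rfl⟩, rfl⟩ | ⟨_, ⟨f, ⟨hf, hzf⟩, rfl⟩, rfl⟩)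
    · rwa [insert_sdiff_self_of_mem hzf]
    · rwa [union_sdiff_of_subset (hV₁ f hf hzf)]

theorem exists_mem_glue_subset_iff {z : α} {V₁ X : Finset α} {E₁ E₂ : Finset (Finset α)} :
    (∃ e ∈ glue z V₁ E₁ E₂, e ⊆ X) ↔
      (z ∈ X ∧ ∃ a ∈ E₁, a ⊆ X) ∨ (V₁ ⊆ X ∧ ∃ b ∈ E₂, b ⊆ X) := by
  simp only [glue, mem_union, mem_image]
  constructor
  · rintro ⟨_, ⟨a, ha, rfl⟩ | ⟨b, hb, rfl⟩, hX⟩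
    · exact .inl ⟨hX (mem_insert_self z a), a, ha, (subset_insert z a).trans hX⟩
    · exact .inr ⟨subset_union_left.trans hX, b, hb, subset_union_right.trans hX⟩
  · rintro (⟨hz, a, ha, haX⟩ | ⟨hV, b, hb, hbX⟩)
    · exact ⟨_, .inl ⟨a, ha, rfl⟩, insert_subset hz haX⟩
    · exact ⟨_, .inr ⟨b, hb, rfl⟩, union_subset hV hbX⟩

/-- The glued weight of `X` is `[z ∈ X] Z + (A S₁ + B c) + S₂`, where `S₁` is the `w₁`-weight and
`c` the size of `X ∩ V₁`, and `S₂` the `w₂`-weight of `X ∩ V₂`; the bounds on `A` and `B` make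
the comparison with the threshold `A t₁ + Z` lexicographic in `(S₁, c, S₂)`. -/
theorem glue_threshold_le_iff {n c W₁ S₁ t₁ W₂ S₂ t₂ A B Z : ℕ} (p : Prop) [Decidable p]
    (hc : c ≤ n) (hS₁ : S₁ ≤ W₁) (hS₂ : S₂ ≤ W₂) (hfull : n ≤ c → S₁ = W₁) (ht₁ : t₁ ≤ W₁)
    (hB : W₂ < B) (hA : B * n + W₂ < A) (hZ : Z = A * (W₁ - t₁) + B * n + t₂) :
    A * t₁ + Z ≤ (if p then Z else 0) + (A * S₁ + B * c) + S₂ ↔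
      (p ∧ t₁ ≤ S₁) ∨ (n ≤ c ∧ t₂ ≤ S₂) := by
  obtain ⟨d, rfl⟩ := Nat.exists_eq_add_of_le ht₁
  rw [Nat.add_sub_cancel_left] at hZ
  subst hZ
  have hBc : B * c ≤ B * n := Nat.mul_le_mul_left B hc
  by_cases hp : p
  · simp only [hp, if_true, true_and]
    constructor
    · intro h
      by_contra! hlt
      nlinarith
    · rintro (h | ⟨hnc, -⟩)
      · nlinarith
      · nlinarith [hfull hnc]
  · simp only [hp, if_false, false_and, false_or]
    constructor
    · intro h
      obtain hcn | hlt := hc.eq_or_lt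
      · exact ⟨hcn.ge, by nlinarith [hfull hcn.ge]⟩
      · nlinarith
    · rintro ⟨hnc, h⟩
      nlinarith [hfull hnc]

theorem le_sum_inter_iff {V : Finset α} {E : Finset (Finset α)} {w : α → ℕ} {t : ℕ}
    (hw : ∀ X ⊆ V, (t ≤ ∑ v ∈ X, w v ↔ ∃ e ∈ E, e ⊆ X)) (hE : ∀ e ∈ E, e ⊆ V) (X : Finset α) :
    t ≤ ∑ v ∈ X ∩ V, w v ↔ ∃ e ∈ E, e ⊆ X := by
  rw [hw _ inter_subset_right]
  exact exists_congr fun e => and_congr_right fun he => by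
    rw [subset_inter_iff, and_iff_left (hE e he)]

theorem IsThresholdOn.glue {V₁ V₂ : Finset α} {E₁ E₂ : Finset (Finset α)}
    (h₁ : IsThresholdOn V₁ E₁) (h₂ : IsThresholdOn V₂ E₂) (hE₁ : ∀ a ∈ E₁, a ⊆ V₁)
    (hE₂ : ∀ b ∈ E₂, b ⊆ V₂) (hne : E₁.Nonempty) (z : α) (V : Finset α) :
    IsThresholdOn V (glue z V₁ E₁ E₂) := by
  obtain ⟨w₁, t₁, hw₁⟩ := h₁
  obtain ⟨w₂, t₂, hw₂⟩ := h₂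
  set B := ∑ v ∈ V₂, w₂ v + 1
  set A := B * #V₁ + B
  set Z := A * (∑ v ∈ V₁, w₁ v - t₁) + B * #V₁ + t₂
  refine ⟨fun v => (if v = z then Z else 0) + (if v ∈ V₁ then A * w₁ v + B else 0) +
    (if v ∈ V₂ then w₂ v else 0), A * t₁ + Z, fun X _ => ?_⟩
  have hsum : ∑ v ∈ X, ((if v = z then Z else 0) + (if v ∈ V₁ then A * w₁ v + B else 0) +
      (if v ∈ V₂ then w₂ v else 0)) = (if z ∈ X then Z else 0) +
      (A * ∑ v ∈ X ∩ V₁, w₁ v + B * #(X ∩ V₁)) + ∑ v ∈ X ∩ V₂, w₂ v := by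
    rw [sum_add_distrib, sum_add_distrib, sum_ite_eq', sum_ite_mem, sum_ite_mem, sum_add_distrib,
      ← mul_sum, sum_const, smul_eq_mul, mul_comm #_]
  have ht₁ : t₁ ≤ ∑ v ∈ V₁, w₁ v := by
    obtain ⟨a, ha⟩ := hne
    exact (hw₁ V₁ subset_rfl).2 ⟨a, ha, hE₁ a ha⟩
  rw [hsum, exists_mem_glue_subset_iff, ← card_le_card_inter_iff, ← le_sum_inter_iff hw₁ hE₁,
    ← le_sum_inter_iff hw₂ hE₂]
  exact glue_threshold_le_iff _ (card_le_card inter_subset_right)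
    (sum_le_sum_of_subset inter_subset_right) (sum_le_sum_of_subset inter_subset_right)
    (fun h => by rw [inter_eq_right.2 (card_le_card_inter_iff.1 h)]) ht₁ (lt_add_one _)
    (by omega) rfl

theorem OneSperner.isThresholdOn {V : Finset α} {E : Finset (Finset α)} (h : OneSperner E)
    (hE : ∀ e ∈ E, e ⊆ V) : IsThresholdOn V E := by
  induction V using Finset.strongInduction generalizing E with
  | H V ih =>
  obtain hcard | hcard := lt_or_ge 1 #E
  · obtain ⟨z, ⟨e, he, hze⟩, hz⟩ := h.exists_pivot hcard
    have hVz : V \ {z} ⊂ V :=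
      sdiff_ssubset (singleton_subset_iff.2 (hE e he hze)) (singleton_nonempty z)
    set V₁ := (link E z).sup id
    set E₂ := (E.filter (z ∉ ·)).image (· \ V₁)
    have hV₁ : V₁ ⊆ V \ {z} :=
      sup_link_subset fun e he _ => sdiff_subset_sdiff (hE e he) subset_rfl
    have hV₁f : ∀ f ∈ E, z ∉ f → V₁ ⊆ f := fun f hf hzf =>
      sup_link_subset fun e he hze => hz e he hze f hf hzf
    have hE₂ : ∀ b ∈ E₂, b ⊆ V \ {z} := fun b hb => by
      obtain ⟨f, hf, rfl⟩ := mem_image.1 hb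
      obtain ⟨hf, hzf⟩ := mem_filter.1 hf
      exact subset_sdiff.2 ⟨sdiff_subset.trans (hE f hf),
        disjoint_singleton_right.2 fun h => hzf (mem_sdiff.1 h).1⟩
    have hE₂sperner : OneSperner E₂ := (h.mono (filter_subset _ E)).image_sdiff fun f hf =>
      hV₁f f (mem_filter.1 hf).1 (mem_filter.1 hf).2
    rw [eq_glue_link hV₁f]
    exact IsThresholdOn.glue
      (ih V₁ (hV₁.trans_ssubset hVz) (oneSperner_link h z) fun a ha => le_sup (f := id) ha)
      (ih (V \ {z}) hVz hE₂sperner hE₂) (fun a ha => le_sup (f := id) ha) hE₂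
      ⟨_, mem_image_of_mem _ (mem_filter.2 ⟨he, hze⟩)⟩ z V
  · obtain rfl | ⟨e, he⟩ := E.eq_empty_or_nonempty
    · exact isThresholdOn_empty V
    · rw [eq_singleton_iff_unique_mem.2 ⟨he, fun f hf => card_le_one.1 hcard f hf e he⟩]
      exact isThresholdOn_singleton V e

end

theorem stmt_8 {α : Type*} [DecidableEq α] (V : Finset α) (E : Finset (Finset α))
    (hE : ∀ e ∈ E, e ⊆ V) (h : OneSperner E) :
    ∃ w : α → ℕ, ∃ t : ℕ, ∀ X ⊆ V, (t ≤ ∑ v ∈ X, w v ↔ ∃ e ∈ E, e ⊆ X) :=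
  h.isThresholdOn hE
end

section
/- Let H = (V, E) be a 1-Sperner hypergraph with E ≠ {∅}. Then the characteristic vectors of the hyperedges of H are linearly independent in ℝ^V; that is, the family (χ^e)_{e ∈ E}, where χ^e : V → ℝ takes value 1 on vertices of e and 0 elsewhere, is linearly independent. -/
/-!
The Gram matrix of the characteristic vectors has entries `|e ∩ f|`. For distinct hyperedges of a
1-Sperner hypergraph, `|e ∩ f| = min(|e|, |f|) - 1`, and `min(a, b) - 1` is the dot product of the
indicator vectors of `[0, a - 1)` and `[0, b - 1)`. Hence the Gram matrix is a positive semidefinite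
Gram matrix plus the identity, so it is positive definite and the vectors are independent.
-/

open Finset

open Matrix

theorem Matrix.linearIndependent_row_of_mul_transpose_eq_add_one {ι κ κ' : Type*}
    [Fintype ι] [DecidableEq ι] [Fintype κ] [Fintype κ'] {U : Matrix ι κ ℝ}
    (W : Matrix ι κ' ℝ) (h : U * Uᵀ = W * Wᵀ + 1) : LinearIndependent ℝ U.row := by
  have hW : (W * Wᵀ).PosSemidef := by
    simpa only [conjTranspose_eq_transpose_of_trivial] using posSemidef_self_mul_conjTranspose W
  have hpos : (U * Uᵀ).PosDef := h ▸ PosDef.posSemidef_add hW .one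
  exact .of_comp Uᵀ.vecMulLinear (linearIndependent_rows_of_isUnit hpos.isUnit)

namespace OneSperner

variable {α : Type*} [DecidableEq α] {E : Finset (Finset α)}

theorem empty_notMem (h : OneSperner E) (hne : E ≠ {∅}) : ∅ ∉ E := by
  intro h0
  obtain ⟨f, hf, hf0⟩ : ∃ f ∈ E, f ≠ ∅ := by
    by_contra! hall
    exact hne (eq_singleton_iff_unique_mem.2 ⟨h0, hall⟩)
  simpa using h ∅ h0 f hf hf0.symm

theorem card_inter (h : OneSperner E) (h0 : ∅ ∉ E) {e f : Finset α} (he : e ∈ E) (hf : f ∈ E) :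
    #(e ∩ f) = min #e #f - 1 + if e = f then 1 else 0 := by
  by_cases hef : e = f
  · subst hef
    have hpos : 0 < #e := card_pos.2 (nonempty_iff_ne_empty.2 (ne_of_mem_of_not_mem he h0))
    simp only [inter_self, min_self, if_true]
    omega
  · have hmin := h e he f hf hef
    have hcard_e := card_sdiff_add_card_inter e f
    have hcard_f := card_sdiff_add_card_inter f e
    rw [inter_comm] at hcard_f
    simp only [hef, if_false]
    omega

end OneSperner

theorem Fin.sum_ite_lt_mul_ite_lt (N a b : ℕ) (ha : a ≤ N) (hb : b ≤ N) :
    ∑ k : Fin N, (if (k : ℕ) < a then (1 : ℝ) else 0) * (if (k : ℕ) < b then 1 else 0) = min a b := by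
  simp_rw [ite_zero_mul_ite_zero, mul_one, ← lt_min_iff, sum_boole, Fin.card_filter_val_lt]
  simp [ha, hb]

theorem sum_ite_mem_mul_ite_mem {α : Type*} [DecidableEq α] {V s : Finset α} (hs : s ⊆ V)
    (t : Finset α) :
    ∑ v : V, (if (v : α) ∈ s then (1 : ℝ) else 0) * (if (v : α) ∈ t then 1 else 0) = #(s ∩ t) := by
  simp_rw [ite_zero_mul_ite_zero, mul_one, ← mem_inter]
  rw [sum_coe_sort V (fun v => if v ∈ s ∩ t then (1 : ℝ) else 0), sum_boole, filter_mem_eq_inter,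
    inter_eq_right.2 (inter_subset_left.trans hs)]

theorem stmt_12 {α : Type*} [DecidableEq α] (V : Finset α) (E : Finset (Finset α))
    (hE : ∀ e ∈ E, e ⊆ V) (h : OneSperner E)
    (hne : E ≠ ({∅} : Finset (Finset α))) :
    LinearIndependent ℝ
      (fun e : {e // e ∈ E} => fun v : {v // v ∈ V} =>
        if (v : α) ∈ (e : Finset α) then (1 : ℝ) else 0) := by
  have h0 := h.empty_notMem hne
  refine Matrix.linearIndependent_row_of_mul_transpose_eq_add_one
    (U := Matrix.of fun (e : E) (v : V) => if (v : α) ∈ (e : Finset α) then (1 : ℝ) else 0)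
    (Matrix.of fun (e : E) (k : Fin #V) => if (k : ℕ) < #(e : Finset α) - 1 then (1 : ℝ) else 0) ?_
  ext e f
  have hV (g : E) : #(g : Finset α) - 1 ≤ #V := (Nat.sub_le _ _).trans (card_le_card (hE _ g.2))
  simp only [mul_apply, Matrix.add_apply, transpose_apply, of_apply, one_apply]
  rw [sum_ite_mem_mul_ite_mem (hE _ e.2), Fin.sum_ite_lt_mul_ite_lt _ _ _ (hV e) (hV f),
    h.card_inter h0 e.2 f.2, Nat.sub_min_sub_right]
  push_cast
  exact congrArg _ (if_congr Subtype.ext_iff.symm rfl rfl)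
end

section
/- Let G be a finite simple graph, let A and B be maximal cliques of G, let a ∈ A \ B and b ∈ B \ A, and suppose a and b are adjacent in G. Then the set (A \ {a}) ∪ {b} contains no maximal clique of G (i.e., it is an independent set of the clique hypergraph of G). -/
open Finset

/-- A finset `A` is a maximal clique of a graph `G` if it is a clique and is not
properly contained in any other clique. -/
def IsMaxClique {α : Type*} (G : SimpleGraph α) (A : Finset α) : Prop :=
  G.IsClique (A : Set α) ∧ ∀ B : Finset α, G.IsClique (B : Set α) → A ⊆ B → A = B

/-! A maximal clique `C` inside `(A \ {a}) ∪ {b}` either avoids `b`, and then lies inside the clique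
`A` but misses `a ∈ A`, or contains `b`, and then every vertex of `C` is adjacent to `a`, so maximality
forces `a ∈ C`, which is impossible since `a ≠ b`. -/

namespace IsMaxClique

variable {α : Type*} [DecidableEq α] {G : SimpleGraph α} {A C : Finset α} {a : α}

theorem mem_of_forall_adj (hC : IsMaxClique G C) (hadj : ∀ z ∈ C, a ≠ z → G.Adj a z) : a ∈ C := by
  have hclique : G.IsClique ((insert a C : Finset α) : Set α) := by
    rw [coe_insert]
    exact hC.1.insert hadj
  rw [hC.2 _ hclique (subset_insert a C)]
  exact mem_insert_self a C

theorem not_subset_erase (hC : IsMaxClique G C) (hA : G.IsClique (A : Set α)) (ha : a ∈ A) :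
    ¬C ⊆ A.erase a := fun hsub => by
  have hCA : C = A := hC.2 A hA (hsub.trans (erase_subset a A))
  exact notMem_erase a A (hsub (hCA ▸ ha))

end IsMaxClique

theorem stmt_15_general {α : Type*} [DecidableEq α] (G : SimpleGraph α)
    (A B : Finset α) (hA : IsMaxClique G A)
    (a b : α) (ha : a ∈ A \ B) (hab : G.Adj a b) :
    ¬∃ C : Finset α, IsMaxClique G C ∧ C ⊆ insert b (A.erase a) := by
  rintro ⟨C, hC, hCsub⟩
  have haA : a ∈ A := (mem_sdiff.mp ha).1
  by_cases hbC : b ∈ C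
  · have haC : a ∈ C := hC.mem_of_forall_adj fun z hz haz => by
      rcases mem_insert.mp (hCsub hz) with rfl | hzA
      · exact hab
      · exact hA.1 haA (mem_erase.mp hzA).2 haz
    rcases mem_insert.mp (hCsub haC) with hab' | haA'
    · exact hab.ne hab'
    · exact notMem_erase a A haA'
  · exact hC.not_subset_erase hA.1 haA ((subset_insert_iff_of_notMem hbC).mp hCsub)

theorem stmt_15 {α : Type*} [Fintype α] [DecidableEq α] (G : SimpleGraph α)
    (A B : Finset α) (hA : IsMaxClique G A) (hB : IsMaxClique G B)
    (a b : α) (ha : a ∈ A \ B) (hb : b ∈ B \ A) (hab : G.Adj a b) :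
    ¬∃ C : Finset α, IsMaxClique G C ∧ C ⊆ insert b (A.erase a) :=
  stmt_15_general G A B hA a b ha hab
end

section
/- Let G be a finite simple graph whose clique hypergraph C(G) is 2-asummable. Then for every pair of maximal cliques A, B of G and every a ∈ A \ B and b ∈ B \ A, the vertices a and b are not adjacent in G. -/
open Finset

/-- A set of vertices is independent in the clique hypergraph `C(G)` if it
contains no maximal clique of `G`. -/
def IndepInCliqueHypergraph {α : Type*} (G : SimpleGraph α) (X : Finset α) : Prop :=
  ¬∃ C : Finset α, IsMaxClique G C ∧ C ⊆ X

/-- The characteristic vector of a finset of vertices. -/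
def chi {α : Type*} [DecidableEq α] (X : Finset α) : α → ℕ :=
  fun v => if v ∈ X then 1 else 0

/-- The clique hypergraph of `G` is 2-asummable if there are no independent sets
`A1, A2` and dependent sets `B1, B2` with `χ^{A1} + χ^{A2} = χ^{B1} + χ^{B2}`. -/
def CliqueHypergraphTwoAsummable {α : Type*} [DecidableEq α] (G : SimpleGraph α) : Prop :=
  ¬∃ A1 A2 B1 B2 : Finset α,
    IndepInCliqueHypergraph G A1 ∧ IndepInCliqueHypergraph G A2 ∧
    ¬IndepInCliqueHypergraph G B1 ∧ ¬IndepInCliqueHypergraph G B2 ∧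
    ∀ v : α, chi A1 v + chi A2 v = chi B1 v + chi B2 v

/-! If `a ∈ A \ B` and `b ∈ B \ A` were adjacent, swapping them would produce the sets
`A - a + b` and `B - b + a`, whose characteristic vectors add up to `χ^A + χ^B`. Both are
independent in `C(G)`: a maximal clique inside `A - a + b` either avoids `b`, and then lies in the
clique `A - a`, or contains `b`, and then all of it is adjacent to `a`; either way it is not
maximal. This contradicts 2-asummability, since `A` and `B` are dependent. -/

section

variable {α : Type*} {G : SimpleGraph α} {A : Finset α}

theorem IsMaxClique.not_indep (hA : IsMaxClique G A) : ¬IndepInCliqueHypergraph G A :=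
  fun h => h ⟨A, hA, Subset.refl A⟩

theorem IsMaxClique.not_forall_adj [DecidableEq α] (hA : IsMaxClique G A) {v : α} (hv : v ∉ A) :
    ¬∀ w ∈ A, G.Adj v w := fun hadj => by
  have hclique : G.IsClique ((insert v A : Finset α) : Set α) := by
    rw [coe_insert]
    exact hA.1.insert fun w hw _ => hadj w hw
  exact hv (hA.2 _ hclique (subset_insert v A) ▸ mem_insert_self v A)

theorem IsMaxClique.indep_insert_erase [DecidableEq α] (hA : IsMaxClique G A) {a b : α}
    (haA : a ∈ A) (hbA : b ∉ A) (hab : G.Adj a b) :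
    IndepInCliqueHypergraph G (insert b (A.erase a)) := by
  rintro ⟨C, hC, hCsub⟩
  have haC : a ∉ C := fun h => by simpa [hab.ne] using hCsub h
  by_cases hbC : b ∈ C
  · refine hC.not_forall_adj haC fun w hw => ?_
    rcases mem_insert.1 (hCsub hw) with rfl | hw'
    · exact hab
    · exact hA.1 haA (mem_of_mem_erase hw') (ne_of_mem_erase hw').symm
  · have hCA : C ⊆ A := fun w hw =>
      mem_of_mem_erase ((mem_insert.1 (hCsub hw)).resolve_left fun h => hbC (h ▸ hw))
    exact haC (hC.2 A hA.1 hCA ▸ haA)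

theorem chi_insert_erase_add_chi_insert_erase [DecidableEq α] {B : Finset α} {a b : α}
    (haA : a ∈ A) (haB : a ∉ B) (hbB : b ∈ B) (hbA : b ∉ A) (v : α) :
    chi (insert b (A.erase a)) v + chi (insert a (B.erase b)) v = chi A v + chi B v := by
  rcases eq_or_ne v a with rfl | hva <;> rcases eq_or_ne v b with rfl | hvb <;>
    simp_all [chi]

end

theorem stmt_16_general {α : Type*} [DecidableEq α] (G : SimpleGraph α)
    (h2as : CliqueHypergraphTwoAsummable G)
    (A B : Finset α) (hA : IsMaxClique G A) (hB : IsMaxClique G B)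
    (a b : α) (ha : a ∈ A \ B) (hb : b ∈ B \ A) :
    ¬G.Adj a b := by
  intro hab
  obtain ⟨haA, haB⟩ := mem_sdiff.1 ha
  obtain ⟨hbB, hbA⟩ := mem_sdiff.1 hb
  exact h2as ⟨_, _, A, B, hA.indep_insert_erase haA hbA hab,
    hB.indep_insert_erase hbB haB hab.symm, hA.not_indep, hB.not_indep,
    chi_insert_erase_add_chi_insert_erase haA haB hbB hbA⟩

theorem stmt_16 {α : Type*} [Fintype α] [DecidableEq α] (G : SimpleGraph α)
    (h2as : CliqueHypergraphTwoAsummable G)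
    (A B : Finset α) (hA : IsMaxClique G A) (hB : IsMaxClique G B)
    (a b : α) (ha : a ∈ A \ B) (hb : b ∈ B \ A) :
    ¬G.Adj a b :=
  stmt_16_general G h2as A B hA hB a b ha hb
end

section
/- Let G be a finite simple graph whose clique hypergraph C(G) is 2-asummable. Then for every pair of maximal cliques A, B of G and every a ∈ A \ B and b ∈ B \ A, the set (A ∪ B) \ {a, b} contains no maximal clique of G (i.e., it is an independent set of the clique hypergraph of G). -/
open Finset

/- If `m ∈ M \ N` and `n ∈ N \ M` are adjacent for maximal cliques `M` and `N`, exchanging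
`m` and `n` turns the dependent pair `M, N` into the independent pair `M - m + n, N - n + m`
with the same characteristic sum. Given a maximal clique `C ⊆ (A ∪ B) \ {a, b}`, maximality
forces `C ⊄ A` and `C ⊄ B`, so `C` contains adjacent vertices of `B \ A` and `A \ B`. -/

section

variable {α : Type*} {G : SimpleGraph α}

theorem IsMaxClique.mem_of_forall_adj_s17 {D : Finset α} {v : α} (hD : IsMaxClique G D)
    (hadj : ∀ u ∈ D, v ≠ u → G.Adj v u) : v ∈ D := by
  classical
  have hclique : G.IsClique ((insert v D : Finset α) : Set α) := by
    rw [coe_insert]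
    exact hD.1.insert hadj
  rw [hD.2 _ hclique (subset_insert v D)]
  exact mem_insert_self v D

theorem IsMaxClique.not_indep_s17 {M : Finset α} (hM : IsMaxClique G M) :
    ¬IndepInCliqueHypergraph G M :=
  not_not_intro ⟨M, hM, subset_rfl⟩

variable [DecidableEq α]

theorem IsMaxClique.indep_sdiff_union_singleton {M : Finset α} {m y : α}
    (hM : IsMaxClique G M) (hm : m ∈ M) (hadj : G.Adj m y) :
    IndepInCliqueHypergraph G ((M \ {m}) ∪ {y}) := by
  rintro ⟨D, hD, hDsub⟩
  have hmD : m ∈ D := hD.mem_of_forall_adj_s17 fun u hu hmu => by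
    rcases mem_union.mp (hDsub hu) with hu' | hu'
    · exact hM.1 hm (mem_sdiff.mp hu').1 hmu
    · rwa [mem_singleton.mp hu']
  simpa [hadj.ne] using hDsub hmD

theorem chi_swap_add {P Q : Finset α} {p q : α} (hp : p ∈ P) (hpQ : p ∉ Q) (hq : q ∈ Q)
    (hqP : q ∉ P) (v : α) :
    chi ((P \ {p}) ∪ {q}) v + chi ((Q \ {q}) ∪ {p}) v = chi P v + chi Q v := by
  simp only [chi, mem_union, mem_sdiff, mem_singleton]
  by_cases h1 : v = p <;> by_cases h2 : v = q <;> by_cases h3 : v ∈ P <;>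
    by_cases h4 : v ∈ Q <;> simp_all

theorem IsMaxClique.not_adj_of_twoAsummable (h2as : CliqueHypergraphTwoAsummable G)
    {M N : Finset α} (hM : IsMaxClique G M) (hN : IsMaxClique G N) {m n : α}
    (hmM : m ∈ M) (hmN : m ∉ N) (hnN : n ∈ N) (hnM : n ∉ M) : ¬G.Adj m n := fun hadj =>
  h2as ⟨_, _, M, N, hM.indep_sdiff_union_singleton hmM hadj,
    hN.indep_sdiff_union_singleton hnN hadj.symm, hM.not_indep_s17, hN.not_indep_s17,
    chi_swap_add hmM hmN hnN hnM⟩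

end

theorem stmt_17_general {α : Type*} [DecidableEq α] (G : SimpleGraph α)
    (h2as : CliqueHypergraphTwoAsummable G)
    (A B : Finset α) (hA : IsMaxClique G A) (hB : IsMaxClique G B)
    (a b : α) (ha : a ∈ A \ B) (hb : b ∈ B \ A) :
    IndepInCliqueHypergraph G ((A ∪ B) \ {a, b}) := by
  rintro ⟨C, hC, hCsub⟩
  have haC : a ∉ C := fun h => (mem_sdiff.mp (hCsub h)).2 (by simp)
  have hbC : b ∉ C := fun h => (mem_sdiff.mp (hCsub h)).2 (by simp)
  have hCAB : C ⊆ A ∪ B := hCsub.trans sdiff_subset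
  obtain ⟨c, hcC, hcA⟩ := not_subset.mp fun h => haC (hC.2 A hA.1 h ▸ (mem_sdiff.mp ha).1)
  obtain ⟨d, hdC, hdB⟩ := not_subset.mp fun h => hbC (hC.2 B hB.1 h ▸ (mem_sdiff.mp hb).1)
  have hcB : c ∈ B := (mem_union.mp (hCAB hcC)).resolve_left hcA
  have hdA : d ∈ A := (mem_union.mp (hCAB hdC)).resolve_right hdB
  have hdc : d ≠ c := by rintro rfl; exact hcA hdA
  exact hA.not_adj_of_twoAsummable h2as hB hdA hdB hcB hcA (hC.1 hdC hcC hdc)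

theorem stmt_17 {α : Type*} [Fintype α] [DecidableEq α] (G : SimpleGraph α)
    (h2as : CliqueHypergraphTwoAsummable G)
    (A B : Finset α) (hA : IsMaxClique G A) (hB : IsMaxClique G B)
    (a b : α) (ha : a ∈ A \ B) (hb : b ∈ B \ A) :
    IndepInCliqueHypergraph G ((A ∪ B) \ {a, b}) :=
  stmt_17_general G h2as A B hA hB a b ha hb
end

section
/- Let G be a finite simple threshold graph. Then the clique hypergraph of G is 1-Sperner; that is, every two distinct maximal cliques A, B of G satisfy min(|A \ B|, |B \ A|) = 1. -/
/-!
In a threshold graph two distinct vertices are adjacent exactly when their weights sum to at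
least `t`, so a vertex `a` is adjacent to every neighbour of any vertex `c` with `w c ≤ w a`.
Hence a vertex outside a maximal clique `B` is lighter than the heavier of any two vertices of
`B`. If two distinct maximal cliques `A`, `B` both had two private vertices, the heavier
private vertex of `A` would be lighter than the heavier one of `B` and vice versa.
-/

open Finset

def IsThresholdWeighting {α : Type*} (G : SimpleGraph α) (w : α → ℕ) (t : ℕ) : Prop :=
  ∀ X : Finset α, t ≤ ∑ v ∈ X, w v ↔ ∃ u ∈ X, ∃ v ∈ X, G.Adj u v

theorem IsMaxClique.sdiff_nonempty {α : Type*} [DecidableEq α] {G : SimpleGraph α}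
    {A B : Finset α} (hA : IsMaxClique G A) (hB : IsMaxClique G B) (hne : A ≠ B) :
    (A \ B).Nonempty :=
  Finset.sdiff_nonempty.2 fun hAB => hne (hA.2 B hB.1 hAB)

namespace IsThresholdWeighting

variable {α : Type*} [DecidableEq α] {G : SimpleGraph α} {w : α → ℕ} {t : ℕ}

theorem adj_iff (h : IsThresholdWeighting G w t) {u v : α} (huv : u ≠ v) :
    G.Adj u v ↔ t ≤ w u + w v := by
  rw [← sum_pair huv, h {u, v}]
  constructor
  · exact fun huv' => ⟨u, by simp, v, by simp, huv'⟩
  · rintro ⟨x, hx, y, hy, hxy⟩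
    simp only [mem_insert, mem_singleton] at hx hy
    rcases hx with rfl | rfl <;> rcases hy with rfl | rfl
    exacts [absurd rfl hxy.ne, hxy, hxy.symm, absurd rfl hxy.ne]

theorem adj_of_adj_of_weight_le (h : IsThresholdWeighting G w t) {a b c : α}
    (hcb : G.Adj c b) (hca : w c ≤ w a) (hab : a ≠ b) : G.Adj a b := by
  have := (h.adj_iff hcb.ne).1 hcb
  exact (h.adj_iff hab).2 (by omega)

theorem weight_lt_max_of_notMem (h : IsThresholdWeighting G w t) {B : Finset α}
    (hB : IsMaxClique G B) {a b₁ b₂ : α} (ha : a ∉ B) (hb₁ : b₁ ∈ B) (hb₂ : b₂ ∈ B)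
    (hb : b₁ ≠ b₂) : w a < max (w b₁) (w b₂) := by
  by_contra! hmax
  have hclique : G.IsClique ((insert a B : Finset α) : Set α) := by
    rw [coe_insert]
    refine hB.1.insert fun b hbB hab => ?_
    by_cases hbb₁ : b = b₁
    · subst hbb₁
      exact h.adj_of_adj_of_weight_le (hB.1 hb₂ hbB hb.symm) (by omega) hab
    · exact h.adj_of_adj_of_weight_le (hB.1 hb₁ hbB (Ne.symm hbb₁)) (by omega) hab
  exact ha (hB.2 _ hclique (subset_insert a B) ▸ mem_insert_self a B)

end IsThresholdWeighting

theorem stmt_18_general {α : Type*} [DecidableEq α] (G : SimpleGraph α)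
    (hthr : ∃ w : α → ℕ, ∃ t : ℕ, ∀ X : Finset α,
      (t ≤ ∑ v ∈ X, w v ↔ ∃ u ∈ X, ∃ v ∈ X, G.Adj u v)) :
    ∀ A B : Finset α, IsMaxClique G A → IsMaxClique G B → A ≠ B →
      min (A \ B).card (B \ A).card = 1 := by
  obtain ⟨w, t, hw : IsThresholdWeighting G w t⟩ := hthr
  intro A B hA hB hne
  have hAB := card_pos.2 (hA.sdiff_nonempty hB hne)
  have hBA := card_pos.2 (hB.sdiff_nonempty hA hne.symm)
  suffices ¬(1 < #(A \ B) ∧ 1 < #(B \ A)) by omega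
  rintro ⟨hA₂, hB₂⟩
  obtain ⟨a₁, ha₁, a₂, ha₂, ha⟩ := one_lt_card.1 hA₂
  obtain ⟨b₁, hb₁, b₂, hb₂, hb⟩ := one_lt_card.1 hB₂
  rw [mem_sdiff] at ha₁ ha₂ hb₁ hb₂
  have := hw.weight_lt_max_of_notMem hB ha₁.2 hb₁.1 hb₂.1 hb
  have := hw.weight_lt_max_of_notMem hB ha₂.2 hb₁.1 hb₂.1 hb
  have := hw.weight_lt_max_of_notMem hA hb₁.2 ha₁.1 ha₂.1 ha
  have := hw.weight_lt_max_of_notMem hA hb₂.2 ha₁.1 ha₂.1 ha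
  omega

theorem stmt_18 {α : Type*} [Fintype α] [DecidableEq α] (G : SimpleGraph α)
    (hthr : ∃ w : α → ℕ, ∃ t : ℕ, ∀ X : Finset α,
      (t ≤ ∑ v ∈ X, w v ↔ ∃ u ∈ X, ∃ v ∈ X, G.Adj u v)) :
    ∀ A B : Finset α, IsMaxClique G A → IsMaxClique G B → A ≠ B →
      min (A \ B).card (B \ A).card = 1 :=
  stmt_18_general G hthr
end
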